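/- arXiv:2012.10665 — 5 statements merged into one kernel-verified Lean document; each statement's English description precedes it below -/
import Mathlib

section
/- PBH-type necessary condition via Kronecker structure: Let F = A + C ⊗ H and G = D ⊗ B with A = blockdiag(A₁,…,A_N). Suppose T is invertible with TCT⁻¹ = diag(λ₁,…,λ_N) and T ⊗ I_n commutes with A. If the pair (F, G) is controllable (equivalently, wF = μw with w ≠ 0 implies wG ≠ 0), then for every i, the row vector e_iTD ≠ 0, where e_i is the i-th standard basis row vector. -/
open Matrix Kronecker

def blockDiag {F : Type*} [Field F] {N n : ℕ}
    (A : Fin N → Matrix (Fin n) (Fin n) F) :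
    Matrix (Fin N × Fin n) (Fin N × Fin n) F :=
  fun p q => if p.1 = q.1 then A p.1 p.2 q.2 else 0

theorem controllable_implies_rows_of_TD_nonzero {F : Type*} [Field F] {N n m : ℕ}
    (A : Fin N → Matrix (Fin n) (Fin n) F) (H : Matrix (Fin n) (Fin n) F)
    (B : Matrix (Fin n) (Fin m) F)
    (C D T : Matrix (Fin N) (Fin N) F) (lam : Fin N → F)
    (hT : IsUnit T) (hdiag : T * C * T⁻¹ = Matrix.diagonal lam)
    (hcomm : (T ⊗ₖ (1 : Matrix (Fin n) (Fin n) F)) * blockDiag A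
           = blockDiag A * (T ⊗ₖ (1 : Matrix (Fin n) (Fin n) F)))
    (heigexists : ∀ i : Fin N, ∃ (ξ : Fin n → F) (μ : F),
        ξ ≠ 0 ∧ ξ ᵥ* (A i + lam i • H) = μ • ξ)
    (hctrb : ∀ (w : Fin N × Fin n → F) (μ : F), w ≠ 0 →
        w ᵥ* (blockDiag A + C ⊗ₖ H) = μ • w → w ᵥ* (D ⊗ₖ B) ≠ 0) :
    ∀ i : Fin N, (T * D) i ≠ 0 := by
  intro i hTD
  obtain ⟨ξ, μ, hξ, heig⟩ := heigexists i
  have hTdet : IsUnit T.det := (Matrix.isUnit_iff_isUnit_det T).mp hT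
  have hTC : T * C = Matrix.diagonal lam * T := by
    have : T * C * T⁻¹ * T = Matrix.diagonal lam * T := by rw [hdiag]
    rwa [Matrix.mul_assoc, Matrix.nonsing_inv_mul T hTdet, Matrix.mul_one] at this
  -- pointwise commutation fact
  have hkey : ∀ (p j : Fin N) (q k : Fin n), T p j * A j q k = A p q k * T p j := by
    intro p j q k
    have h := congrFun (congrFun hcomm (p, q)) (j, k)
    simp only [Matrix.mul_apply, Fintype.sum_prod_type, _root_.blockDiag,
      Matrix.kroneckerMap_apply, Matrix.one_apply, mul_ite, ite_mul, mul_one, one_mul,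
      mul_zero, zero_mul, Finset.sum_ite_eq, Finset.sum_ite_eq', Finset.mem_univ,
      if_true] at h
    simpa using h
  set w : Fin N × Fin n → F := fun p => T i p.1 * ξ p.2 with hw
  have hwne : w ≠ 0 := by
    have hrow : ∃ j, T i j ≠ 0 := by
      by_contra h
      push_neg at h
      have h1 : (T * T⁻¹) i i = 1 := by
        rw [Matrix.mul_nonsing_inv T hTdet]; simp
      rw [Matrix.mul_apply] at h1
      simp [h] at h1
    obtain ⟨j, hj⟩ := hrow
    obtain ⟨k, hk⟩ := Function.ne_iff.mp hξ
    intro h0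
    have := congrFun h0 (j, k)
    simp [hw] at this
    rcases this with h | h
    · exact hj h
    · exact hk h
  have heq : w ᵥ* (blockDiag A + C ⊗ₖ H) = μ • w := by
    funext jk
    obtain ⟨j, k⟩ := jk
    have heigk := congrFun heig k
    simp only [Matrix.vecMul, dotProduct, Matrix.add_apply, Pi.add_apply,
      Matrix.smul_apply, Pi.smul_apply, smul_eq_mul] at heigk ⊢
    rw [Fintype.sum_prod_type]
    have step1 : ∀ p : Fin N, ∑ q : Fin n, w (p, q) *
        ((blockDiag A + C ⊗ₖ H) (p, q) (j, k))
        = (if p = j then ∑ q, T i p * ξ q * A p q k else 0)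
          + (T i p * C p j) * ∑ q, ξ q * H q k := by
      intro p
      simp only [Matrix.add_apply, _root_.blockDiag, Matrix.kroneckerMap_apply, hw,
        mul_add, mul_ite, mul_zero]
      rw [Finset.sum_add_distrib]
      congr 1
      · split <;> simp
      · rw [Finset.mul_sum]
        apply Finset.sum_congr rfl; intro q _; ring
    calc ∑ p : Fin N, ∑ q : Fin n, w (p, q) * ((blockDiag A + C ⊗ₖ H) (p, q) (j, k))
        = ∑ p : Fin N, ((if p = j then ∑ q, T i p * ξ q * A p q k else 0)
          + (T i p * C p j) * ∑ q, ξ q * H q k) := by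
          exact Finset.sum_congr rfl fun p _ => step1 p
      _ = (∑ q, T i j * ξ q * A j q k) + (∑ p, T i p * C p j) * ∑ q, ξ q * H q k := by
          rw [Finset.sum_add_distrib, Finset.sum_ite_eq' Finset.univ j, Finset.sum_mul]
          simp
      _ = T i j * ((∑ q, ξ q * A i q k) + lam i * ∑ q, ξ q * H q k) := by
          have h2 : (∑ p, T i p * C p j) = lam i * T i j := by
            have := congrFun (congrFun hTC i) j
            rw [Matrix.mul_apply] at this
            rw [this, Matrix.diagonal_mul]
          rw [h2]
          have h3 : ∀ q, T i j * ξ q * A j q k = T i j * (ξ q * A i q k) := by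
            intro q
            have := hkey i j q k
            calc T i j * ξ q * A j q k = ξ q * (T i j * A j q k) := by ring
              _ = ξ q * (A i q k * T i j) := by rw [this]
              _ = T i j * (ξ q * A i q k) := by ring
          rw [Finset.sum_congr rfl fun q _ => h3 q, ← Finset.mul_sum]
          ring
      _ = μ • w (j, k) := by
          have h4 : (∑ q, ξ q * A i q k) + lam i * ∑ q, ξ q * H q k = μ * ξ k := by
            rw [← heigk]
            simp [Matrix.add_apply, Matrix.smul_apply, mul_add, Finset.sum_add_distrib,
              Finset.mul_sum, smul_eq_mul]
            apply Finset.sum_congr rfl; intro q _; ring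
          rw [h4]; simp [hw]; ring
  have h0 : w ᵥ* (D ⊗ₖ B) = 0 := by
    funext jk
    obtain ⟨j, k⟩ := jk
    have hTDj : (T * D) i j = 0 := congrFun hTD j
    rw [Matrix.mul_apply] at hTDj
    simp only [Matrix.vecMul, dotProduct, Matrix.kroneckerMap_apply, hw]
    rw [Fintype.sum_prod_type]
    have : ∀ p : Fin N, ∑ q : Fin n, T i p * ξ q * (D p j * B q k)
        = (T i p * D p j) * ∑ q, ξ q * B q k := by
      intro p; rw [Finset.mul_sum]
      apply Finset.sum_congr rfl; intro q _; ring
    rw [Finset.sum_congr rfl fun p _ => this p, ← Finset.sum_mul]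
    simp only [Pi.zero_apply]
    rw [hTDj, zero_mul]
  exact hctrb w μ hwne heq h0
end

section
/- PBH-type necessary condition: with F = A + C ⊗ H, G = D ⊗ B, A = blockdiag(A₁,…,A_N), TCT⁻¹ = diag(λ₁,…,λ_N), and T ⊗ I_n commuting with A, if (F, G) is controllable then for each i the pair (A_i + λ_i H, B) is controllable. -/
open Matrix Kronecker

theorem controllable_implies_node_pairs_controllable
    {F : Type*} [Field F] [IsAlgClosed F] {N n m : ℕ}
    (A : Fin N → Matrix (Fin n) (Fin n) F) (H : Matrix (Fin n) (Fin n) F)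
    (B : Matrix (Fin n) (Fin m) F)
    (C D T : Matrix (Fin N) (Fin N) F) (lam : Fin N → F)
    (hT : IsUnit T) (hdiag : T * C * T⁻¹ = Matrix.diagonal lam)
    (hcomm : (T ⊗ₖ (1 : Matrix (Fin n) (Fin n) F)) * blockDiag A
           = blockDiag A * (T ⊗ₖ (1 : Matrix (Fin n) (Fin n) F)))
    (hctrb : ∀ (w : Fin N × Fin n → F) (μ : F), w ≠ 0 →
        w ᵥ* (blockDiag A + C ⊗ₖ H) = μ • w → w ᵥ* (D ⊗ₖ B) ≠ 0) :
    ∀ i : Fin N, ∀ (ξ : Fin n → F) (μ : F), ξ ≠ 0 →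
        ξ ᵥ* (A i + lam i • H) = μ • ξ → ξ ᵥ* B ≠ 0 := by
  intro i ξ μ hξ heig hB0
  have hTdet : IsUnit T.det := (Matrix.isUnit_iff_isUnit_det T).mp hT
  -- T * C = diagonal lam * T
  have hTC : T * C = Matrix.diagonal lam * T := by
    calc T * C = T * C * T⁻¹ * T := by
          rw [Matrix.mul_assoc (T * C), Matrix.nonsing_inv_mul T hTdet, Matrix.mul_one]
      _ = Matrix.diagonal lam * T := by rw [hdiag]
  -- entrywise consequence of hcomm: T i j * A j k k' = T i j * A i k k'
  have hA : ∀ (j : Fin N) (k k' : Fin n), T i j * A j k k' = T i j * A i k k' := by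
    intro j k k'
    have h := congrFun (congrFun hcomm (i, k)) (j, k')
    simp [Matrix.mul_apply, Matrix.kroneckerMap_apply, _root_.blockDiag, Matrix.one_apply,
      Fintype.sum_prod_type, mul_ite, ite_mul, mul_zero, zero_mul, mul_one, one_mul,
      Finset.sum_ite_eq, Finset.sum_ite_eq', Finset.mem_univ, if_true] at h
    linear_combination h
  set w : Fin N × Fin n → F := fun p => T i p.1 * ξ p.2 with hw
  have hwne : w ≠ 0 := by
    have hrow : ∃ j, T i j ≠ 0 := by
      by_contra h
      push_neg at h
      have : (fun j => T i j) ᵥ* T⁻¹ = 0 := by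
        funext q
        simp [Matrix.vecMul, dotProduct, h]
      have h1 : (fun j => T i j) ᵥ* T⁻¹ = Pi.single i 1 := by
        have : (fun j => T i j) = Pi.single i 1 ᵥ* T := by
          funext q
          simp [Matrix.vecMul, dotProduct, Pi.single_apply, Finset.sum_ite_eq]
        rw [this, Matrix.vecMul_vecMul, Matrix.mul_nonsing_inv T hTdet, Matrix.vecMul_one]
      rw [h1] at this
      have := congrFun this i
      simp at this
    obtain ⟨j, hj⟩ := hrow
    obtain ⟨k, hk⟩ := Function.ne_iff.mp hξ
    intro h
    have := congrFun h (j, k)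
    simp only [hw, Pi.zero_apply] at this
    exact (mul_ne_zero hj hk) this
  have hCrow : ∀ j' : Fin N, (∑ j, T i j * C j j') = lam i * T i j' := by
    intro j'
    have := congrFun (congrFun hTC i) j'
    simpa [Matrix.mul_apply, Matrix.diagonal_apply, Finset.sum_ite_eq] using this
  have heigw : w ᵥ* (blockDiag A + C ⊗ₖ H) = μ • w := by
    funext p
    obtain ⟨j', k'⟩ := p
    have heigc := congrFun heig k'
    simp only [Matrix.vecMul, dotProduct, Matrix.add_apply, Matrix.smul_apply,
      Pi.smul_apply, smul_eq_mul] at heigc ⊢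
    simp only [hw, Matrix.kroneckerMap_apply, _root_.blockDiag, Fintype.sum_prod_type]
    have step1 : ∀ j : Fin N, ∑ k, T i j * ξ k *
        ((if j = j' then A j k k' else 0) + C j j' * H k k')
        = (if j = j' then T i j' * ∑ k, ξ k * A i k k' else 0)
          + (T i j * C j j') * ∑ k, ξ k * H k k' := by
      intro j
      rw [Finset.sum_congr rfl (fun k _ => mul_add _ _ _), Finset.sum_add_distrib]
      congr 1
      · by_cases hjj : j = j'
        · subst hjj
          simp only [if_pos rfl]
          rw [Finset.mul_sum]
          refine Finset.sum_congr rfl fun k _ => ?_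
          calc T i j * ξ k * A j k k' = ξ k * (T i j * A j k k') := by ring
            _ = ξ k * (T i j * A i k k') := by rw [hA]
            _ = T i j * (ξ k * A i k k') := by ring
        · simp [hjj]
      · rw [Finset.mul_sum]
        congr 1; funext k; ring
    rw [Finset.sum_congr rfl (fun j _ => step1 j), Finset.sum_add_distrib]
    rw [Finset.sum_ite_eq' Finset.univ j' (fun j => T i j' * ∑ k, ξ k * A i k k')]
    simp only [Finset.mem_univ, if_true]
    have : ∑ j, (T i j * C j j') * ∑ k, ξ k * H k k'
        = (lam i * T i j') * ∑ k, ξ k * H k k' := by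
      rw [← Finset.sum_mul, hCrow]
    rw [this]
    have lhs_eq : T i j' * ∑ k, ξ k * A i k k' + lam i * T i j' * ∑ k, ξ k * H k k'
        = T i j' * ∑ k, ξ k * (A i k k' + lam i * H k k') := by
      rw [Finset.mul_sum, Finset.mul_sum, Finset.mul_sum, ← Finset.sum_add_distrib]
      refine Finset.sum_congr rfl fun k _ => ?_
      ring
    rw [lhs_eq, heigc]
    ring
  have hwB : w ᵥ* (D ⊗ₖ B) = 0 := by
    funext p
    obtain ⟨j', k'⟩ := p
    have hBc : ∀ k', ∑ k, ξ k * B k k' = 0 := by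
      intro k'
      have := congrFun hB0 k'
      simpa [Matrix.vecMul, dotProduct] using this
    simp only [Matrix.vecMul, dotProduct, Matrix.kroneckerMap_apply, hw,
      Fintype.sum_prod_type, Pi.zero_apply]
    have : ∀ j : Fin N, ∑ k, T i j * ξ k * (D j j' * B k k')
        = (T i j * D j j') * ∑ k, ξ k * B k k' := by
      intro j
      rw [Finset.mul_sum]; congr 1; funext k; ring
    rw [Finset.sum_congr rfl (fun j _ => this j)]
    simp [hBc k']
  exact hctrb w μ hwne heigw hwB
end

section
/- If e_i T D = 0 for some index i, where TCT⁻¹ = diag(λ₁,…,λ_N) and T ⊗ I_n commutes with A = blockdiag(A₁,…,A_N), then the networked system (F, G) with F = A + C ⊗ H and G = D ⊗ B is not controllable (there exists a left eigenvector w of F with wG = 0). -/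
open Matrix Kronecker

theorem not_controllable_of_row_of_TD_zero
    {F : Type*} [Field F] [IsAlgClosed F] {N n m : ℕ} [NeZero n]
    (A : Fin N → Matrix (Fin n) (Fin n) F) (H : Matrix (Fin n) (Fin n) F)
    (B : Matrix (Fin n) (Fin m) F)
    (C D T : Matrix (Fin N) (Fin N) F) (lam : Fin N → F)
    (hT : IsUnit T) (hdiag : T * C * T⁻¹ = Matrix.diagonal lam)
    (hcomm : (T ⊗ₖ (1 : Matrix (Fin n) (Fin n) F)) * blockDiag A
           = blockDiag A * (T ⊗ₖ (1 : Matrix (Fin n) (Fin n) F)))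
    (i : Fin N) (hzero : (T * D) i = 0) :
    ∃ (w : Fin N × Fin n → F) (μ : F), w ≠ 0 ∧
      w ᵥ* (blockDiag A + C ⊗ₖ H) = μ • w ∧ w ᵥ* (D ⊗ₖ B) = 0 := by
  classical
  have hdet : IsUnit T.det := (Matrix.isUnit_iff_isUnit_det T).mp hT
  have hTC : T * C = Matrix.diagonal lam * T := by
    have h := congrArg (· * T) hdiag
    simpa [Matrix.mul_assoc, Matrix.nonsing_inv_mul T hdet] using h
  have hA : ∀ j k l, T i j * A j k l = T i j * A i k l := by
    intro j k l
    have h := congrFun (congrFun hcomm (i, k)) (j, l)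
    simp only [Matrix.mul_apply, Fintype.sum_prod_type, _root_.blockDiag,
      Matrix.kroneckerMap_apply, Matrix.one_apply, mul_ite, ite_mul, mul_zero,
      zero_mul, mul_one, one_mul, Finset.sum_ite_eq, Finset.sum_ite_eq',
      Finset.mem_univ, if_true] at h
    have h1 : (∑ x : Fin N, ∑ x1 : Fin n,
        if x = j then if k = x1 then T i x * A x x1 l else 0 else 0)
        = T i j * A j k l := by
      have hx : ∀ x : Fin N, (∑ x1 : Fin n,
          if x = j then if k = x1 then T i x * A x x1 l else 0 else 0)
          = if x = j then T i x * A x k l else 0 := by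
        intro x
        by_cases hx : x = j <;> simp [hx, Finset.sum_ite_eq]
      rw [Finset.sum_congr rfl fun x _ => hx x]
      simp [Finset.sum_ite_eq']
    rw [h1] at h
    linear_combination h
  obtain ⟨μ, hμ⟩ := Module.End.exists_eigenvalue
    (Matrix.mulVecLin ((A i + lam i • H)ᵀ))
  obtain ⟨v, hv⟩ := hμ.exists_hasEigenvector
  have hvne : v ≠ 0 := hv.right
  have hveq : v ᵥ* (A i + lam i • H) = μ • v := by
    have h := hv.apply_eq_smul
    rw [Matrix.mulVecLin_apply] at h
    rw [← Matrix.mulVec_transpose]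
    exact h
  have hvl : ∀ l, ∑ k, v k * (A i k l + lam i * H k l) = μ * v l := by
    intro l
    have h := congrFun hveq l
    simpa [Matrix.vecMul, dotProduct, Matrix.add_apply, Matrix.smul_apply,
      smul_eq_mul] using h
  have hrow : ∃ j, T i j ≠ 0 := by
    by_contra h
    push_neg at h
    have h1 : (T * T⁻¹) i i = 1 := by
      rw [Matrix.mul_nonsing_inv T hdet]; simp
    rw [Matrix.mul_apply] at h1
    simp [h] at h1
  refine ⟨fun p => T i p.1 * v p.2, μ, ?_, ?_, ?_⟩
  · obtain ⟨j, hj⟩ := hrow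
    obtain ⟨k, hk⟩ : ∃ k, v k ≠ 0 := by
      by_contra h; push_neg at h; exact hvne (funext h)
    intro h
    exact mul_ne_zero hj hk (congrFun h (j, k))
  · funext q
    obtain ⟨j, l⟩ := q
    have hTCij : ∑ a, T i a * C a j = lam i * T i j := by
      have h := congrFun (congrFun hTC i) j
      simpa [Matrix.mul_apply, Matrix.diagonal_apply, ite_mul, zero_mul,
        Finset.sum_ite_eq] using h
    show ∑ p : Fin N × Fin n, T i p.1 * v p.2 *
        ((blockDiag A + C ⊗ₖ H) p (j, l)) = μ * (T i j * v l)
    simp only [Matrix.add_apply, _root_.blockDiag, Matrix.kroneckerMap_apply]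
    rw [Fintype.sum_prod_type]
    have key : ∀ k, ∑ a, T i a * v k * ((if a = j then A a k l else 0) + C a j * H k l)
        = T i j * (v k * A i k l) + (lam i * T i j) * (v k * H k l) := by
      intro k
      have h1 : ∑ a, T i a * v k * (if a = j then A a k l else 0)
          = T i j * v k * A j k l := by
        simp [mul_ite, Finset.sum_ite_eq']
      have h2 : ∑ a, T i a * v k * (C a j * H k l)
          = (∑ a, T i a * C a j) * (v k * H k l) := by
        rw [Finset.sum_mul]
        exact Finset.sum_congr rfl fun a _ => by ring
      calc ∑ a, T i a * v k * ((if a = j then A a k l else 0) + C a j * H k l)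
          = (∑ a, T i a * v k * (if a = j then A a k l else 0))
            + ∑ a, T i a * v k * (C a j * H k l) := by
            rw [← Finset.sum_add_distrib]
            exact Finset.sum_congr rfl fun a _ => by ring
        _ = T i j * (v k * A i k l) + (lam i * T i j) * (v k * H k l) := by
            rw [h1, h2, hTCij]
            linear_combination v k * hA j k l
    calc ∑ a, ∑ k, T i a * v k * ((if a = j then A a k l else 0) + C a j * H k l)
        = ∑ k, ∑ a, T i a * v k * ((if a = j then A a k l else 0) + C a j * H k l) :=
          Finset.sum_comm
      _ = ∑ k, (T i j * (v k * A i k l) + (lam i * T i j) * (v k * H k l)) :=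
          Finset.sum_congr rfl fun k _ => key k
      _ = T i j * ∑ k, v k * (A i k l + lam i * H k l) := by
          rw [Finset.mul_sum]
          exact Finset.sum_congr rfl fun k _ => by ring
      _ = μ * (T i j * v l) := by rw [hvl l]; ring
  · funext q
    obtain ⟨j, l⟩ := q
    have hz : ∑ a, T i a * D a j = 0 := by
      have h := congrFun hzero j
      simpa [Matrix.mul_apply] using h
    show ∑ p : Fin N × Fin n, T i p.1 * v p.2 * ((D ⊗ₖ B) p (j, l)) = 0
    simp only [Matrix.kroneckerMap_apply]
    rw [Fintype.sum_prod_type]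
    calc ∑ a, ∑ k, T i a * v k * (D a j * B k l)
        = ∑ a, (T i a * D a j) * ∑ k, v k * B k l := by
          refine Finset.sum_congr rfl fun a _ => ?_
          rw [Finset.mul_sum]
          exact Finset.sum_congr rfl fun k _ => by ring
      _ = (∑ a, T i a * D a j) * ∑ k, v k * B k l := by rw [Finset.sum_mul]
      _ = 0 := by rw [hz, zero_mul]
end

section
/- Suppose the j-th row of the N×N matrix C is zero (node j has no incoming edges), F = A + C ⊗ H with A = blockdiag(A₁,…,A_N), and G = D ⊗ B with D diagonal. If ξ is a left eigenvector of A_j with ξB = 0, then e_j ⊗ ξ is a left eigenvector of F satisfying (e_j ⊗ ξ)G = 0; hence if (A_j, B) fails the PBH test, then (F, G) fails the PBH test (the networked system is not controllable). -/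
open Matrix Kronecker

lemma sum_ite_pull {F : Type*} [Field F] {n : ℕ} (f : Fin n → F) (P : Prop)
    [Decidable P] : (∑ i, if P then f i else 0) = if P then ∑ i, f i else 0 := by
  split <;> simp

theorem not_controllable_of_no_incoming_edges {F : Type*} [Field F] {N n m : ℕ}
    (A : Fin N → Matrix (Fin n) (Fin n) F) (H : Matrix (Fin n) (Fin n) F)
    (B : Matrix (Fin n) (Fin m) F)
    (C : Matrix (Fin N) (Fin N) F) (d : Fin N → F)
    (j : Fin N) (hrow : ∀ k : Fin N, C j k = 0)
    (ξ : Fin n → F) (μ : F) (hξ : ξ ≠ 0)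
    (heig : ξ ᵥ* A j = μ • ξ) (hB : ξ ᵥ* B = 0) :
    (fun p : Fin N × Fin n => (if p.1 = j then (1 : F) else 0) * ξ p.2) ᵥ*
        (blockDiag A + C ⊗ₖ H) =
      μ • (fun p : Fin N × Fin n => (if p.1 = j then (1 : F) else 0) * ξ p.2) ∧
    (fun p : Fin N × Fin n => (if p.1 = j then (1 : F) else 0) * ξ p.2) ≠ 0 ∧
    (fun p : Fin N × Fin n => (if p.1 = j then (1 : F) else 0) * ξ p.2) ᵥ*
        ((Matrix.diagonal d) ⊗ₖ B) = 0 := by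
  have h1 : ∀ i, ∑ x, ξ x * A j x i = μ * ξ i := fun i => by
    have := congrFun heig i
    simpa [vecMul, dotProduct] using this
  have hBq : ∀ r, ∑ i, ξ i * B i r = 0 := fun r => by
    have := congrFun hB r
    simpa [vecMul, dotProduct] using this
  refine ⟨?_, ?_, ?_⟩
  · funext q
    simp only [vecMul, dotProduct, Fintype.sum_prod_type, Matrix.add_apply,
      kroneckerMap_apply, ite_mul, one_mul, zero_mul, Pi.smul_apply, smul_eq_mul,
      _root_.blockDiag]
    have pull : ∀ x : Fin N,
        (∑ x_1 : Fin n, if x = j then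
            ξ x_1 * ((if x = q.1 then A x x_1 q.2 else 0) + C x q.1 * H x_1 q.2) else 0)
        = if x = j then
            ∑ x_1 : Fin n, ξ x_1 * ((if x = q.1 then A x x_1 q.2 else 0) + C x q.1 * H x_1 q.2)
          else 0 := fun x => sum_ite_pull _ _
    rw [Finset.sum_congr rfl fun x _ => pull x, Finset.sum_ite_eq' Finset.univ j]
    simp only [Finset.mem_univ, if_true, hrow, zero_mul, add_zero]
    by_cases hq : q.1 = j
    · simp only [if_pos hq.symm, if_pos hq]
      exact h1 q.2
    · simp only [if_neg (fun h : j = q.1 => hq h.symm), if_neg hq, mul_zero,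
        Finset.sum_const_zero]
  · obtain ⟨i, hi⟩ := Function.ne_iff.mp hξ
    intro h
    have := congrFun h (j, i)
    simp at this
    exact hi this
  · funext q
    simp only [vecMul, dotProduct, Fintype.sum_prod_type, kroneckerMap_apply,
      diagonal_apply, ite_mul, one_mul, zero_mul, mul_ite, mul_zero]
    have pull : ∀ x : Fin N,
        (∑ x_1 : Fin n, if x = q.1 then if x = j then ξ x_1 * (d x * B x_1 q.2) else 0 else 0)
        = if x = q.1 then if x = j then ∑ x_1, ξ x_1 * (d x * B x_1 q.2) else 0 else 0 := by
      intro x; by_cases h : x = q.1 <;> by_cases h2 : x = j <;> simp [h, h2]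
    rw [Finset.sum_congr rfl fun x _ => pull x, Finset.sum_ite_eq' Finset.univ q.1]
    simp only [Finset.mem_univ, if_true, Pi.zero_apply]
    by_cases hq : q.1 = j
    · rw [if_pos hq, hq]
      calc ∑ x, ξ x * (d j * B x q.2) = d j * ∑ x, ξ x * B x q.2 := by
            rw [Finset.mul_sum]; exact Finset.sum_congr rfl fun _ _ => by ring
        _ = 0 := by rw [hBq]; ring
    · rw [if_neg hq]
end

section
/- Suppose the j-th column of C is zero (node j has no outgoing edges), F = A + C ⊗ H with A = blockdiag(A₁,…,A_N), G = D ⊗ B. If ξ is a left eigenvector of A_j with ξH = 0 and ξB = 0, then e_j ⊗ ξ is a left eigenvector of F with (e_j ⊗ ξ)G = 0, so the networked system is not controllable. -/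
open Matrix Kronecker

theorem not_controllable_of_no_outgoing_edges {F : Type*} [Field F] {N n m : ℕ}
    (A : Fin N → Matrix (Fin n) (Fin n) F) (H : Matrix (Fin n) (Fin n) F)
    (B : Matrix (Fin n) (Fin m) F)
    (C : Matrix (Fin N) (Fin N) F) (d : Fin N → F)
    (j : Fin N) (hcol : ∀ k : Fin N, C k j = 0)
    (ξ : Fin n → F) (μ : F) (hξ : ξ ≠ 0)
    (heig : ξ ᵥ* A j = μ • ξ) (hH : ξ ᵥ* H = 0) (hB : ξ ᵥ* B = 0) :
    (fun p : Fin N × Fin n => (if p.1 = j then (1 : F) else 0) * ξ p.2) ᵥ*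
        (blockDiag A + C ⊗ₖ H) =
      μ • (fun p : Fin N × Fin n => (if p.1 = j then (1 : F) else 0) * ξ p.2) ∧
    (fun p : Fin N × Fin n => (if p.1 = j then (1 : F) else 0) * ξ p.2) ≠ 0 ∧
    (fun p : Fin N × Fin n => (if p.1 = j then (1 : F) else 0) * ξ p.2) ᵥ*
        ((Matrix.diagonal d) ⊗ₖ B) = 0 := by
  have key : ∀ (M : Matrix (Fin N × Fin n) (Fin N × Fin n) F) (q : Fin N × Fin n),
      ((fun p : Fin N × Fin n => (if p.1 = j then (1 : F) else 0) * ξ p.2) ᵥ* M) q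
        = ∑ i : Fin n, ξ i * M (j, i) q := by
    intro M q
    simp only [vecMul, dotProduct, Fintype.sum_prod_type]
    rw [Finset.sum_eq_single j]
    · simp
    · intro k _ hk; simp [hk]
    · simp
  have keyB : ∀ (M : Matrix (Fin N × Fin n) (Fin N × Fin m) F) (q : Fin N × Fin m),
      ((fun p : Fin N × Fin n => (if p.1 = j then (1 : F) else 0) * ξ p.2) ᵥ* M) q
        = ∑ i : Fin n, ξ i * M (j, i) q := by
    intro M q
    simp only [vecMul, dotProduct, Fintype.sum_prod_type]
    rw [Finset.sum_eq_single j]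
    · simp
    · intro k _ hk; simp [hk]
    · simp
  refine ⟨?_, ?_, ?_⟩
  · funext q
    obtain ⟨l, i⟩ := q
    rw [key]
    have hHi : ∑ x : Fin n, ξ x * H x i = 0 := by
      have := congrFun hH i
      simpa [vecMul, dotProduct] using this
    simp only [_root_.blockDiag, Matrix.add_apply, Matrix.kroneckerMap_apply]
    by_cases h : l = j
    · rw [h]
      simp only [if_pos rfl, Pi.smul_apply, smul_eq_mul]
      have heigi : ∑ x : Fin n, ξ x * A j x i = μ * ξ i := by
        have := congrFun heig i
        simpa [vecMul, dotProduct] using this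
      calc ∑ x : Fin n, ξ x * (A j x i + C j j * H x i)
          = (∑ x : Fin n, ξ x * A j x i) + C j j * ∑ x : Fin n, ξ x * H x i := by
            rw [Finset.mul_sum, ← Finset.sum_add_distrib]; congr 1; funext x; ring
        _ = μ * (1 * ξ i) := by rw [hHi, heigi]; ring
      -- adjust goal shape
    · have hne : j ≠ l := fun hh => h hh.symm
      simp only [if_neg hne, zero_add, Pi.smul_apply, smul_eq_mul, if_neg h,
        mul_zero, smul_zero, zero_mul]
      calc ∑ x : Fin n, ξ x * (C j l * H x i)
          = C j l * ∑ x : Fin n, ξ x * H x i := by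
            rw [Finset.mul_sum]; congr 1; funext x; ring
        _ = 0 := by rw [hHi]; ring
      
  · intro h0
    obtain ⟨i, hi⟩ := Function.ne_iff.mp hξ
    have := congrFun h0 (j, i)
    simp at this
    exact hi this
  · funext q
    obtain ⟨l, i⟩ := q
    rw [keyB]
    simp only [Matrix.kroneckerMap_apply, Matrix.diagonal_apply]
    by_cases h : j = l
    · subst h
      have := congrFun hB i
      simp only [vecMul, dotProduct] at this
      simp only [if_pos rfl]
      calc ∑ k : Fin n, ξ k * (d j * B k i) = d j * ∑ k, ξ k * B k i := by
            rw [Finset.mul_sum]; congr 1; funext k; ring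
        _ = 0 := by
            have h0 : ∑ x : Fin n, ξ x * B x i = 0 := by simpa using this
            rw [h0]; ring
    · simp [h]
end
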